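/- Let G be a finite undirected graph with vertex set V and edge set E (possibly including loops), with a weight α_e > 0 assigned to each edge e ∈ E, and let x0 ∈ V. Define the process law p on finite strings over V starting at x0 by p(empty string) = 1 and, recursively, p(x,i,j) = p(x,i) · (α_{(i,j)} + T_{i,j}(x0,x,i) + T_{j,i}(x0,x,i)) / (α_{(i,·)} + T_{i,·}(x0,x,i) + T_{·,i}(x0,x,i)) if {i,j} ∈ E, and p(x,i,j) = 0 otherwise, where α_{(i,·)} = ∑_k α_{(i,k)} is the sum of the weights of the edges incident to i, T_{i,·}(z) = ∑_{j'} T_{i,j'}(z) and T_{·,i}(z) = ∑_{j'} T_{j',i}(z). Then p (the law of the edge reinforced random walk on G) is Markov exchangeable. -/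

import Mathlib

/-!
STATEMENT 17: the process law of an edge reinforced random walk on a finite
undirected graph (possibly with loops) is Markov exchangeable.
-/

open scoped Classical

variable {V : Type*} [Fintype V] [DecidableEq V]

/-- The number of transitions from `i` to `j` in the finite string `z`. -/
def transCount (z : List V) (i j : V) : ℕ :=
  (z.zip z.tail).countP (fun q => decide (q = (i, j)))

/-- The number of transitions from `i` in the finite string `z`. -/
def transFrom (z : List V) (i : V) : ℕ :=
  (z.zip z.tail).countP (fun q => decide (q.1 = i))

/-- The number of transitions into `i` in the finite string `z`. -/
def transTo (z : List V) (i : V) : ℕ :=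
  (z.zip z.tail).countP (fun q => decide (q.2 = i))

/-- Two finite strings are equivalent if they have the same first element and the
same transition counts between any two states. -/
def StringEquiv (z z' : List V) : Prop :=
  z.head? = z'.head? ∧ ∀ i j : V, transCount z i j = transCount z' i j

/-- One-step predictive probability of the edge reinforced random walk: the past
path is `z` (starting at `x0`, ending at the current state), the next state is `y`. -/
noncomputable def errwStep (E : Set (Sym2 V)) (α : Sym2 V → ℝ) (z : List V) (y : V) : ℝ :=
  match z.getLast? with
  | none => 0
  | some i =>
    if s(i, y) ∈ E then
      (α s(i, y) + (transCount z i y : ℝ) + (transCount z y i : ℝ)) /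
        ((∑ m : V, if s(i, m) ∈ E then α s(i, m) else 0) +
          (transFrom z i : ℝ) + (transTo z i : ℝ))
    else 0

/-- The probability of appending the string `x` to the past path `z`. -/
noncomputable def lawFrom (step : List V → V → ℝ) : List V → List V → ℝ
  | _, [] => 1
  | z, y :: rest => step z y * lawFrom step (z ++ [y]) rest

/-- The process law of the edge reinforced random walk started at `x0`:
`errwLaw E α x0 (x1, …, xn) = P(X_1 = x1, …, X_n = xn)`. -/
noncomputable def errwLaw (E : Set (Sym2 V)) (α : Sym2 V → ℝ) (x0 : V) (x : List V) : ℝ :=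
  lawFrom (errwStep E α) [x0] x

/-!
The one-step probabilities telescope. A step across an edge `e` traversed `k` times before has
numerator `α e + k` (`α e + 2 k` for a loop), and the `m+1`-st departure from a vertex `a` has
denominator the total weight at `a` plus `2 m + 1 - [a = x0]`, since a walk standing at `a` has
entered it once more than it has left it unless `a = x0`. Hence the law of a path is a product
over edges divided by a product over vertices, whose factors depend only on the number of
traversals of each edge and of departures from each vertex, both functions of the transition
counts.
-/

open Finset

theorem Finset.prod_prod_range_add_ite {ι M : Type*} [Fintype ι] [DecidableEq ι] [CommMonoid M]
    (f : ι → ℕ → M) (n : ι → ℕ) (i : ι) :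
    ∏ j, ∏ k ∈ range (n j + if j = i then 1 else 0), f j k =
      (∏ j, ∏ k ∈ range (n j), f j k) * f i (n i) := by
  calc ∏ j, ∏ k ∈ range (n j + if j = i then 1 else 0), f j k
      = ∏ j, ((∏ k ∈ range (n j), f j k) * if j = i then f i (n i) else 1) := by
        refine prod_congr rfl fun j _ => ?_
        split_ifs with h
        · subst h; exact prod_range_succ _ _
        · simp
    _ = (∏ j, ∏ k ∈ range (n j), f j k) * f i (n i) := by
        rw [prod_mul_distrib, prod_ite_eq', if_pos (mem_univ i)]

section Strings

variable {S : Type*}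

theorem List.zip_tail_append_singleton {l : List S} {a : S} (h : l.getLast? = some a) (b : S) :
    (l ++ [b]).zip (l ++ [b]).tail = l.zip l.tail ++ [(a, b)] := by
  induction l with
  | nil => simp at h
  | cons c t ih =>
    cases t with
    | nil => simp_all
    | cons d t => simp_all [List.getLast?_cons_cons]

theorem mul_lawFrom_eq {step : List S → S → ℝ} {F : List S → ℝ} {z : List S}
    (hF : ∀ w y, F (z ++ w ++ [y]) = F (z ++ w) * step (z ++ w) y) (x : List S) :
    F z * lawFrom step z x = F (z ++ x) := by
  induction x generalizing z with
  | nil => simp [lawFrom]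
  | cons y x ih =>
    have hy : F z * step z y = F (z ++ [y]) := by simpa using (hF [] y).symm
    rw [lawFrom, ← mul_assoc, hy, ih fun w y' => by simpa using hF (y :: w) y']
    simp

variable [DecidableEq S]

def edgeCount (z : List S) (e : Sym2 S) : ℕ :=
  (z.zip z.tail).countP (fun q => decide (s(q.1, q.2) = e))

section Append

variable {z : List S} {i : S} (hi : z.getLast? = some i) (y : S)
include hi

theorem transFrom_append_singleton (a : S) :
    transFrom (z ++ [y]) a = transFrom z a + if a = i then 1 else 0 := by
  simp [transFrom, List.zip_tail_append_singleton hi, eq_comm]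

theorem transTo_append_singleton (a : S) :
    transTo (z ++ [y]) a = transTo z a + if a = y then 1 else 0 := by
  simp [transTo, List.zip_tail_append_singleton hi, eq_comm]

theorem edgeCount_append_singleton (e : Sym2 S) :
    edgeCount (z ++ [y]) e = edgeCount z e + if e = s(i, y) then 1 else 0 := by
  simp [edgeCount, List.zip_tail_append_singleton hi, eq_comm]

end Append

theorem transTo_add_ite_head_eq (z : List S) (a : S) :
    transTo z a + (if z.head? = some a then 1 else 0) =
      transFrom z a + if z.getLast? = some a then 1 else 0 := by
  induction z using List.reverseRecOn with
  | nil => simp [transTo, transFrom]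
  | append_singleton z y ih =>
    cases hi : z.getLast? with
    | none =>
      obtain rfl : z = [] := List.getLast?_eq_none_iff.mp hi
      simp [transTo, transFrom]
    | some i =>
      have hz : z ≠ [] := by rintro rfl; simp at hi
      rw [hi] at ih
      simp only [transTo_append_singleton hi, transFrom_append_singleton hi,
        List.head?_append_of_ne_nil _ hz, List.getLast?_concat]
      split_ifs at ih ⊢ <;> simp_all

theorem transCount_add_transCount_swap (z : List S) (a b : S) :
    transCount z a b + transCount z b a = (if a = b then 2 else 1) * edgeCount z s(a, b) := by
  unfold transCount edgeCount
  induction z.zip z.tail with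
  | nil => simp
  | cons q l ih =>
    have hq : ((if q = (a, b) then 1 else 0) + if q = (b, a) then 1 else 0) =
        (if a = b then 2 else 1) * if s(q.1, q.2) = s(a, b) then 1 else 0 := by
      obtain ⟨c, d⟩ := q
      simp only [Prod.mk.injEq, Sym2.eq_iff]
      split_ifs <;> grind
    simp only [List.countP_cons, decide_eq_true_eq]
    rw [mul_add, ← ih, ← hq]
    ring

-- A traversal of a loop `s(i, i)` is counted by both transition counts in the step numerator.
noncomputable def reinforcedWeight (E : Set (Sym2 S)) (α : Sym2 S → ℝ) (e : Sym2 S) (k : ℕ) : ℝ :=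
  if e ∈ E then α e + (if e.IsDiag then 2 else 1) * k else 0

theorem reinforcedWeight_edgeCount (E : Set (Sym2 S)) (α : Sym2 S → ℝ) (z : List S) (i y : S) :
    reinforcedWeight E α s(i, y) (edgeCount z s(i, y)) =
      if s(i, y) ∈ E then α s(i, y) + transCount z i y + transCount z y i else 0 := by
  rw [reinforcedWeight, add_assoc, ← Nat.cast_add, transCount_add_transCount_swap]
  simp only [Sym2.mk_isDiag_iff]
  split_ifs <;> simp

theorem edgeCount_congr {z z' : List S} (h : ∀ a b, transCount z a b = transCount z' a b)
    (e : Sym2 S) : edgeCount z e = edgeCount z' e := by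
  induction e using Sym2.ind with
  | _ a b =>
    have hz := transCount_add_transCount_swap z a b
    have hz' := transCount_add_transCount_swap z' a b
    rw [h, h] at hz
    split_ifs at hz hz' <;> omega

end Strings

theorem transFrom_eq_sum_transCount (z : List V) (a : V) :
    transFrom z a = ∑ b, transCount z a b := by
  unfold transFrom transCount
  induction z.zip z.tail with
  | nil => simp
  | cons q l ih =>
    simp only [List.countP_cons, sum_add_distrib, ← ih]
    by_cases h : q.1 = a
    · simp [h, Prod.ext_iff, sum_ite_eq]
    · simp [h, Prod.ext_iff]

noncomputable def errwProductFormula (E : Set (Sym2 V)) (α : Sym2 V → ℝ) (x0 : V)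
    (z : List V) : ℝ :=
  (∏ e : Sym2 V, ∏ k ∈ range (edgeCount z e), reinforcedWeight E α e k) /
    ∏ a : V, ∏ m ∈ range (transFrom z a),
      ((∑ b : V, if s(a, b) ∈ E then α s(a, b) else 0) + 2 * m + 1 - if x0 = a then 1 else 0)

theorem errwProductFormula_append_singleton (E : Set (Sym2 V)) (α : Sym2 V → ℝ) {z : List V}
    {x0 i : V} (h0 : z.head? = some x0) (hi : z.getLast? = some i) (y : V) :
    errwProductFormula E α x0 (z ++ [y]) = errwProductFormula E α x0 z * errwStep E α z y := by
  have hden : (∑ b, if s(i, b) ∈ E then α s(i, b) else 0) + (transFrom z i : ℝ) + transTo z i =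
      (∑ b, if s(i, b) ∈ E then α s(i, b) else 0) + 2 * transFrom z i + 1 -
        if x0 = i then 1 else 0 := by
    have h := transTo_add_ite_head_eq z i
    simp only [h0, hi, Option.some_inj, if_true] at h
    have h' : (transTo z i : ℝ) + (if x0 = i then 1 else 0) = transFrom z i + 1 := by
      exact_mod_cast h
    linarith
  simp only [errwProductFormula, edgeCount_append_singleton hi, transFrom_append_singleton hi,
    Finset.prod_prod_range_add_ite, errwStep, hi, reinforcedWeight_edgeCount, hden]
  rw [mul_div_mul_comm, ite_div, zero_div]

theorem errwProductFormula_singleton (E : Set (Sym2 V)) (α : Sym2 V → ℝ) (x0 : V) :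
    errwProductFormula E α x0 [x0] = 1 := by
  simp [errwProductFormula, edgeCount, transFrom]

theorem errwProductFormula_congr (E : Set (Sym2 V)) (α : Sym2 V → ℝ) (x0 : V) {z z' : List V}
    (h : ∀ a b, transCount z a b = transCount z' a b) :
    errwProductFormula E α x0 z = errwProductFormula E α x0 z' := by
  simp only [errwProductFormula, edgeCount_congr h, transFrom_eq_sum_transCount, h]

theorem errwLaw_eq_errwProductFormula (E : Set (Sym2 V)) (α : Sym2 V → ℝ) (x0 : V)
    (x : List V) : errwLaw E α x0 x = errwProductFormula E α x0 (x0 :: x) := by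
  have h := mul_lawFrom_eq (F := errwProductFormula E α x0) (z := [x0]) (step := errwStep E α)
    (fun w y => errwProductFormula_append_singleton E α (by simp)
      (List.getLast?_eq_some_getLast (by simp)) y) x
  simpa [errwLaw, errwProductFormula_singleton] using h

theorem errw_markovExchangeable_general
    (E : Set (Sym2 V)) (α : Sym2 V → ℝ) (x0 : V) :
    ∀ x x' : List V, StringEquiv (x0 :: x) (x0 :: x') →
      errwLaw E α x0 x = errwLaw E α x0 x' := by
  intro x x' h
  rw [errwLaw_eq_errwProductFormula, errwLaw_eq_errwProductFormula]
  exact errwProductFormula_congr E α x0 h.2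

theorem errw_markovExchangeable
    (E : Set (Sym2 V)) (α : Sym2 V → ℝ) (hα : ∀ e ∈ E, 0 < α e) (x0 : V) :
    ∀ x x' : List V, StringEquiv (x0 :: x) (x0 :: x') →
      errwLaw E α x0 x = errwLaw E α x0 x' :=
  errw_markovExchangeable_general E α x0
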